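/- arXiv:1108.2002 — 4 statements merged into one kernel-verified Lean document; each statement's English description precedes it below -/
import Mathlib

section
/- Let γ > 0 and let i, j > 0 be real numbers. Then the functions f₁(k) := γ^k·(i−k)^{i−k}·(j−k)^{j−k} and f₂(k) := k^k·γ^k·(i−k)^{i−k}·(j−k)^{j−k} are convex on the open interval (0, min{i, j}). -/
/-!
On `(0, min i j)` both functions are positive, and their logarithms
`k log γ + (i - k) log (i - k) + (j - k) log (j - k)` (plus `k log k` for the second) are sums of
a linear function and of copies of the convex function `x log x` precomposed with affine maps.
A convex function composed with the increasing convex function `exp` is convex.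
-/

open Set Real

theorem ConvexOn.exp {E : Type*} [AddCommMonoid E] [Module ℝ E] {s : Set E} {g : E → ℝ}
    (hg : ConvexOn ℝ s g) :
    ConvexOn ℝ s fun x => Real.exp (g x) := by
  refine ⟨hg.1, fun x hx y hy a b ha hb hab => ?_⟩
  calc Real.exp (g (a • x + b • y)) ≤ Real.exp (a • g x + b • g y) :=
        exp_le_exp.2 (hg.2 hx hy ha hb hab)
    _ ≤ a • Real.exp (g x) + b • Real.exp (g y) :=
        convexOn_exp.2 (mem_univ _) (mem_univ _) ha hb hab

theorem convexOn_sub_mul_log_sub (c : ℝ) :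
    ConvexOn ℝ (Iic c) fun x => (c - x) * log (c - x) := by
  have h := convexOn_mul_log.comp_affineMap (AffineEquiv.constVSub ℝ c).toAffineMap
  have hpre : (AffineEquiv.constVSub ℝ c).toAffineMap ⁻¹' Ici 0 = Iic c := by
    ext x; simp
  exact hpre ▸ h

theorem stmt_15_general (γ i j : ℝ) (hγ : 0 < γ) :
    ConvexOn ℝ (Ioo (0:ℝ) (min i j))
      (fun k : ℝ => γ ^ k * (i - k) ^ (i - k) * (j - k) ^ (j - k)) ∧
    ConvexOn ℝ (Ioo (0:ℝ) (min i j))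
      (fun k : ℝ => k ^ k * γ ^ k * (i - k) ^ (i - k) * (j - k) ^ (j - k)) := by
  set s := Ioo (0:ℝ) (min i j)
  have hs : Convex ℝ s := convex_Ioo _ _
  have hi : ∀ k ∈ s, k < i := fun k hk => hk.2.trans_le (min_le_left i j)
  have hj : ∀ k ∈ s, k < j := fun k hk => hk.2.trans_le (min_le_right i j)
  have hlog : ConvexOn ℝ s fun k =>
      k * log γ + (i - k) * log (i - k) + (j - k) * log (j - k) :=
    (((LinearMap.mulRight ℝ (log γ)).convexOn hs).add
      ((convexOn_sub_mul_log_sub i).subset (fun k hk => (hi k hk).le) hs)).add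
      ((convexOn_sub_mul_log_sub j).subset (fun k hk => (hj k hk).le) hs)
  have hf₁ : ∀ k ∈ s, γ ^ k * (i - k) ^ (i - k) * (j - k) ^ (j - k) =
      Real.exp (k * log γ + (i - k) * log (i - k) + (j - k) * log (j - k)) := by
    intro k hk
    rw [rpow_def_of_pos hγ, rpow_def_of_pos (sub_pos.2 (hi k hk)),
      rpow_def_of_pos (sub_pos.2 (hj k hk)),
      ← Real.exp_add, ← Real.exp_add]
    congr 1
    ring
  refine ⟨hlog.exp.congr fun k hk => (hf₁ k hk).symm, ?_⟩
  refine ((convexOn_mul_log.subset (fun k hk => hk.1.le) hs).add hlog).exp.congr fun k hk => ?_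
  simp only [Pi.add_apply, mul_assoc] at hf₁ ⊢
  rw [hf₁ k hk, rpow_def_of_pos hk.1, ← Real.exp_add]
  congr 1
  ring

/-- Convexity of `k ↦ γᵏ(i-k)^{i-k}(j-k)^{j-k}` and
`k ↦ kᵏγᵏ(i-k)^{i-k}(j-k)^{j-k}` on `(0, min{i,j})`, where `t^s` denotes
the real power `exp(s·log t)`. -/
theorem stmt_15 (γ i j : ℝ) (hγ : 0 < γ) (hi : 0 < i) (hj : 0 < j) :
    ConvexOn ℝ (Ioo (0:ℝ) (min i j))
      (fun k : ℝ => γ ^ k * (i - k) ^ (i - k) * (j - k) ^ (j - k)) ∧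
    ConvexOn ℝ (Ioo (0:ℝ) (min i j))
      (fun k : ℝ => k ^ k * γ ^ k * (i - k) ^ (i - k) * (j - k) ^ (j - k)) :=
  stmt_15_general γ i j hγ
end

section
/- Let a ≤ b ≤ c ≤ d be real numbers and let f : ℝ → ℝ be nonnegative and convex on [a,d]. Then sup_{x∈[b,c]} f(x) = max{ min{f(a), f(b)}, min{f(c), f(d)} }. -/
open Set

/-- For a nonnegative convex function `f` on `[a,d]` and `a ≤ b ≤ c ≤ d`, the
supremum of `f` over `[b,c]` equals `max{min{f(a),f(b)}, min{f(c),f(d)}}`. -/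
theorem stmt_16 (a b c d : ℝ) (f : ℝ → ℝ)
    (hab : a ≤ b) (hbc : b ≤ c) (hcd : c ≤ d)
    (hf0 : ∀ x ∈ Icc a d, 0 ≤ f x)
    (hconv : ConvexOn ℝ (Icc a d) f) :
    sSup (f '' Icc b c) = max (min (f a) (f b)) (min (f c) (f d)) := by
  have hbmem : b ∈ Icc a d := ⟨hab, hbc.trans hcd⟩
  have hcmem : c ∈ Icc a d := ⟨hab.trans hbc, hcd⟩
  have hamem : a ∈ Icc a d := ⟨le_refl a, (hab.trans hbc).trans hcd⟩
  have hdmem : d ∈ Icc a d := ⟨(hab.trans hbc).trans hcd, le_refl d⟩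
  -- The sup over [b,c] is max (f b) (f c)
  have hsup : sSup (f '' Icc b c) = max (f b) (f c) := by
    apply IsGreatest.csSup_eq
    constructor
    · rcases le_total (f b) (f c) with h | h
      · rw [max_eq_right h]; exact ⟨c, ⟨hbc, le_refl c⟩, rfl⟩
      · rw [max_eq_left h]; exact ⟨b, ⟨le_refl b, hbc⟩, rfl⟩
    · rintro y ⟨x, hx, rfl⟩
      have hxseg : x ∈ segment ℝ b c := by
        rw [segment_eq_Icc hbc]; exact hx
      exact hconv.le_on_segment hbmem hcmem hxseg
  rw [hsup]
  -- if f d < f c then f c ≤ f b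
  have key1 : f d < f c → f c ≤ f b := by
    intro h2
    have hcd' : c < d := lt_of_le_of_ne hcd (by rintro rfl; linarith)
    rcases eq_or_lt_of_le hbc with rfl | hbc'
    · exact le_refl _
    · have hm := hconv.slope_mono_adjacent hbmem hdmem hbc' hcd'
      have hneg : (f d - f c) / (d - c) < 0 :=
        div_neg_of_neg_of_pos (by linarith) (by linarith)
      have hle := lt_of_le_of_lt hm hneg
      have hpos : 0 < c - b := by linarith
      nlinarith [(div_lt_iff₀ hpos).mp hle]
  -- if f a < f b then f b ≤ f c
  have key2 : f a < f b → f b ≤ f c := by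
    intro h1
    have hab' : a < b := lt_of_le_of_ne hab (by rintro rfl; linarith)
    rcases eq_or_lt_of_le hbc with rfl | hbc'
    · exact le_refl _
    · have hm := hconv.slope_mono_adjacent hamem hcmem hab' hbc'
      have hpos : 0 < (f b - f a) / (b - a) := div_pos (by linarith) (by linarith)
      have hle := lt_of_lt_of_le hpos hm
      have hpos' : 0 < c - b := by linarith
      nlinarith [(lt_div_iff₀ hpos').mp hle]
  rcases le_or_gt (f b) (f a) with h1 | h1 <;> rcases le_or_gt (f c) (f d) with h2 | h2
  · rw [min_eq_right h1, min_eq_left h2]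
  · have hcb := key1 h2
    rw [min_eq_right h1, min_eq_right h2.le,
      max_eq_left hcb, max_eq_left (by linarith : f d ≤ f b)]
  · have hbcle := key2 h1
    rw [min_eq_left h1.le, min_eq_left h2,
      max_eq_right hbcle, max_eq_right (by linarith : f a ≤ f c)]
  · exfalso
    have hcb := key1 h2
    have hbcle := key2 h1
    have hab' : a < b := lt_of_le_of_ne hab (by rintro rfl; linarith)
    have hcd' : c < d := lt_of_le_of_ne hcd (by rintro rfl; linarith)
    have hm : (f b - f a) / (b - a) ≤ (f d - f c) / (d - c) := by
      rcases eq_or_lt_of_le hbc with rfl | hbc'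
      · exact hconv.slope_mono_adjacent hamem hdmem hab' hcd'
      · exact le_trans (hconv.slope_mono_adjacent hamem hcmem hab' hbc')
          (hconv.slope_mono_adjacent hbmem hdmem hbc' hcd')
    have h3 : 0 < (f b - f a) / (b - a) := div_pos (by linarith) (by linarith)
    have h4 : (f d - f c) / (d - c) < 0 :=
      div_neg_of_neg_of_pos (by linarith) (by linarith)
    linarith
end

section
/- For all constants γ_A > 0, X ∈ (0,1), C₁ > 0, and β > 0, there exist constants C > 0 and γ > 0 (independent of ε and μ) such that for all 0 < ε ≤ μ ≤ 1, all M ∈ ℕ, and all x̂ ≥ 0 with x̂·ε·γ_A ≤ X: Σ_{i=M+1}^{∞} (ε/μ)^i · Σ_{k=i−M}^{i} μ^k x̂^k γ_A^k · (μ + 1/(i−k+1))^{i−k} · (1/(i−k)!) · (C₁(i−k) + x̂)^{2(i−k)} · e^{−βx̂} ≤ (C·μ/(1−X)) · (γ·ε·(M+1+1/μ))^{M+1} · e^{−βx̂/2}. -/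
/-!
Write `j = i - k` and `k = n + m + 1`, so that `j + m = M`. After cancelling the powers of `μ`,
the `(i, k)` summand is `(ε x̂ γ_A)^n · (ε x̂ γ_A)^(m+1) · A_j · e^{-βx̂}` with
`A_j = (ε/μ)^j (μ + 1/(j+1))^j (C₁ j + x̂)^{2j} / j!`. The first factor is at most `X^n`, which
sums to `1/(1-X)`. Each of the other two factors is bounded at the price of `e^{βx̂/4}`, using
`y^p ≤ p! e^y` and `p^p ≤ e^p p!`; each unit of `j + m + 1 = M + 1` then costs a factor `γ ε s`
with `s = M + 1 + 1/μ`, and one factor `ε ≤ μ · ε s` supplies the prefactor `μ`. The `M + 1`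
values of `k` are absorbed by `M + 1 ≤ 2^(M+1)`.
-/
open Finset

/-- The `i`-th term of the residual sum of the truncated boundary-layer
expansion:
`(ε/μ)^i · Σ_{k=i-M}^{i} μ^k x̂^k γ_A^k (μ + 1/(i-k+1))^{i-k} (1/(i-k)!)
  (C₁(i-k)+x̂)^{2(i-k)} e^{-βx̂}`. -/
noncomputable def term18 (γA C₁ β ε μ xh : ℝ) (M i : ℕ) : ℝ :=
  (ε / μ) ^ i *
    ∑ k ∈ Finset.Icc (i - M) i,
      μ ^ k * xh ^ k * γA ^ k * (μ + 1 / (((i - k : ℕ) : ℝ) + 1)) ^ (i - k) *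
        (1 / ((i - k).factorial : ℝ)) * (C₁ * ((i - k : ℕ) : ℝ) + xh) ^ (2 * (i - k)) *
        Real.exp (-β * xh)

open Real Nat

lemma Nat.factorial_succ_le_pow_self (m : ℕ) : (m + 1)! ≤ (m + 1) ^ m := by
  have h := Nat.factorial_mul_ascFactorial 1 m
  rw [Nat.factorial_one, one_mul, add_comm 1 m] at h
  rw [← h, add_comm m 1]
  exact Nat.ascFactorial_le_pow_add 1 m

lemma pow_le_factorial_div_pow_mul_exp {x δ : ℝ} (hx : 0 ≤ x) (hδ : 0 < δ) (n : ℕ) :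
    x ^ n ≤ n ! / δ ^ n * exp (δ * x) := by
  have h := Real.pow_div_factorial_le_exp _ (mul_nonneg hδ.le hx) n
  rw [mul_pow, div_le_iff₀ (by positivity)] at h
  rw [div_mul_eq_mul_div, le_div_iff₀ (by positivity)]
  linarith

lemma natCast_pow_self_le (n : ℕ) : (n : ℝ) ^ n ≤ exp 1 ^ n * n ! := by
  have h := Real.pow_div_factorial_le_exp _ (Nat.cast_nonneg (α := ℝ) n) n
  rwa [div_le_iff₀ (by positivity), ← exp_one_pow] at h

lemma mul_add_le_mul_exp {a x δ t : ℝ} (ha : 0 ≤ a) (hx : 0 ≤ x) (hδ : 0 < δ) (ht : 0 < t) :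
    a * t + x ≤ (a + 1 / δ) * t * exp (δ * x / t) := by
  have h1 : 1 ≤ exp (δ * x / t) := one_le_exp (by positivity)
  have h2 : δ * x / t ≤ exp (δ * x / t) := by linarith [add_one_le_exp (δ * x / t)]
  have hx' : x = t / δ * (δ * x / t) := by field_simp
  calc a * t + x = a * t * 1 + t / δ * (δ * x / t) := by rw [mul_one, ← hx']
    _ ≤ a * t * exp (δ * x / t) + t / δ * exp (δ * x / t) := by gcongr
    _ = (a + 1 / δ) * t * exp (δ * x / t) := by ring

lemma mul_add_pow_two_mul_le {a x δ : ℝ} (ha : 0 ≤ a) (hx : 0 ≤ x) (hδ : 0 < δ) (j : ℕ) :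
    (a * j + x) ^ (2 * j) ≤ ((a + 2 / δ) * j) ^ (2 * j) * exp (δ * x) := by
  rcases j.eq_zero_or_pos with rfl | hj
  · simpa using one_le_exp (by positivity : 0 ≤ δ * x)
  have hj' : (0 : ℝ) < j := by exact_mod_cast hj
  calc (a * j + x) ^ (2 * j) ≤ ((a + 1 / (δ / 2)) * j * exp (δ / 2 * x / j)) ^ (2 * j) := by
        gcongr
        exact mul_add_le_mul_exp ha hx (half_pos hδ) hj'
    _ = ((a + 2 / δ) * j) ^ (2 * j) * exp (δ * x) := by
        rw [mul_pow, ← exp_nat_mul, one_div_div]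
        congr 2
        push_cast
        field_simp

lemma mul_pow_two_mul_div_factorial_le (D : ℝ) (j : ℕ) :
    (D * j) ^ (2 * j) / j ! ≤ (exp 1 * D ^ 2 * j) ^ j := by
  rw [div_le_iff₀ (by positivity)]
  calc (D * j) ^ (2 * j) = (D ^ 2 * j) ^ j * (j : ℝ) ^ j := by rw [pow_mul, ← mul_pow]; ring
    _ ≤ (D ^ 2 * j) ^ j * (exp 1 ^ j * j !) := by gcongr; exact natCast_pow_self_le j
    _ = (exp 1 * D ^ 2 * j) ^ j * j ! := by ring

lemma div_mul_add_one_div_mul_le {ε μ : ℝ} (hε : 0 ≤ ε) (hμ : 0 < μ) (j : ℕ) :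
    ε / μ * (μ + 1 / ((j : ℝ) + 1)) * j ≤ ε * (j + 1 / μ) := by
  have hj : (j : ℝ) / (j + 1) ≤ 1 := by rw [div_le_one (by positivity)]; linarith
  calc ε / μ * (μ + 1 / ((j : ℝ) + 1)) * j = ε * j + ε / μ * (j / (j + 1)) := by
        field_simp
    _ ≤ ε * j + ε / μ * 1 := by gcongr
    _ = ε * (j + 1 / μ) := by ring

lemma boundaryFactor_le {ε μ a x δ s : ℝ} (hε : 0 ≤ ε) (hμ : 0 < μ) (ha : 0 ≤ a) (hx : 0 ≤ x)
    (hδ : 0 < δ) {j : ℕ} (hs : j + 1 / μ ≤ s) :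
    (ε / μ) ^ j * (μ + 1 / ((j : ℝ) + 1)) ^ j * (1 / (j ! : ℝ)) * (a * j + x) ^ (2 * j) ≤
      (exp 1 * (a + 2 / δ) ^ 2 * ε * s) ^ j * exp (δ * x) := by
  set D := a + 2 / δ
  set q := ε / μ * (μ + 1 / ((j : ℝ) + 1))
  calc (ε / μ) ^ j * (μ + 1 / ((j : ℝ) + 1)) ^ j * (1 / (j ! : ℝ)) * (a * j + x) ^ (2 * j)
        = q ^ j * ((a * j + x) ^ (2 * j) / j !) := by rw [mul_pow]; ring
    _ ≤ q ^ j * ((D * j) ^ (2 * j) * exp (δ * x) / j !) := by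
        gcongr
        exact mul_add_pow_two_mul_le ha hx hδ j
    _ = q ^ j * ((D * j) ^ (2 * j) / j !) * exp (δ * x) := by ring
    _ ≤ q ^ j * (exp 1 * D ^ 2 * j) ^ j * exp (δ * x) := by
        gcongr
        exact mul_pow_two_mul_div_factorial_le D j
    _ = (q * j * (exp 1 * D ^ 2)) ^ j * exp (δ * x) := by simp only [mul_pow]; ring
    _ ≤ (ε * s * (exp 1 * D ^ 2)) ^ j * exp (δ * x) := by
        gcongr (?_ * _) ^ _ * _
        exact (div_mul_add_one_div_mul_le hε hμ j).trans (by gcongr)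
    _ = (exp 1 * D ^ 2 * ε * s) ^ j * exp (δ * x) := by ring

lemma mul_mul_pow_succ_le_mul_exp {ε μ x γ δ s : ℝ} (hε : 0 ≤ ε) (hx : 0 ≤ x) (hγ : 0 ≤ γ)
    (hδ : 0 < δ) {m : ℕ} (hms : m + 1 ≤ s) (hμs : 1 ≤ μ * s) :
    (ε * x * γ) ^ (m + 1) ≤ μ * (γ / δ * ε * s) ^ (m + 1) * exp (δ * x) := by
  have hfact : ((m + 1)! : ℝ) ≤ ((m : ℝ) + 1) ^ m := by
    exact_mod_cast Nat.factorial_succ_le_pow_self m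
  have hs : 0 ≤ s := by linarith [(m.cast_nonneg : (0 : ℝ) ≤ m)]
  have hμ : 0 ≤ μ := by nlinarith
  have hε' : ε ≤ μ * (ε * s) := by nlinarith
  calc (ε * x * γ) ^ (m + 1) = (ε * γ) ^ (m + 1) * x ^ (m + 1) := by ring
    _ ≤ (ε * γ) ^ (m + 1) * ((m + 1)! / δ ^ (m + 1) * exp (δ * x)) := by
        gcongr
        exact pow_le_factorial_div_pow_mul_exp hx hδ (m + 1)
    _ ≤ (ε * γ) ^ (m + 1) * (((m : ℝ) + 1) ^ m / δ ^ (m + 1) * exp (δ * x)) := by gcongr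
    _ = (γ / δ) ^ (m + 1) * ε * (ε * (m + 1)) ^ m * exp (δ * x) := by
        rw [div_pow, mul_pow ε ((m : ℝ) + 1) m]; field_simp; ring
    _ ≤ (γ / δ) ^ (m + 1) * (μ * (ε * s)) * (ε * s) ^ m * exp (δ * x) := by gcongr
    _ = μ * (γ / δ * ε * s) ^ (m + 1) * exp (δ * x) := by ring

-- `8 / β = 2 / δ` and `4 γA / β = γA / δ` for `δ = β / 4`, the share of `e^{-βx̂}` spent on
-- each of the two factors in `residual_summand_le`.
noncomputable def residualRate (γA C₁ β : ℝ) : ℝ := max (exp 1 * (C₁ + 8 / β) ^ 2) (4 * γA / β)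

lemma residualRate_pos {γA C₁ β : ℝ} (hC₁ : 0 ≤ C₁) (hβ : 0 < β) : 0 < residualRate γA C₁ β :=
  lt_max_of_lt_left (by positivity)

lemma residual_summand_eq {ε μ x γA C₁ β : ℝ} (hμ : μ ≠ 0) (j k : ℕ) :
    (ε / μ) ^ (j + k) *
      (μ ^ k * x ^ k * γA ^ k * (μ + 1 / ((j : ℝ) + 1)) ^ j * (1 / (j ! : ℝ)) *
        (C₁ * j + x) ^ (2 * j) * exp (-β * x)) =
    (ε * x * γA) ^ k *
      ((ε / μ) ^ j * (μ + 1 / ((j : ℝ) + 1)) ^ j * (1 / (j ! : ℝ)) * (C₁ * j + x) ^ (2 * j)) *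
      exp (-β * x) := by
  rw [pow_add, div_pow ε μ k]
  field_simp
  ring

lemma residual_summand_le {γA X C₁ β ε μ x s : ℝ} (hγA : 0 ≤ γA) (hC₁ : 0 ≤ C₁) (hβ : 0 < β)
    (hε : 0 ≤ ε) (hμ : 0 < μ) (hx : 0 ≤ x) (hX : x * ε * γA ≤ X) {j m : ℕ} (n : ℕ)
    (hjs : j + 1 / μ ≤ s) (hms : m + 1 ≤ s) :
    (ε / μ) ^ (j + (m + 1 + n)) *
      (μ ^ (m + 1 + n) * x ^ (m + 1 + n) * γA ^ (m + 1 + n) * (μ + 1 / ((j : ℝ) + 1)) ^ j *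
        (1 / (j ! : ℝ)) * (C₁ * j + x) ^ (2 * j) * exp (-β * x)) ≤
      X ^ n * (μ * (residualRate γA C₁ β * ε * s) ^ (j + m + 1) * exp (-β * x / 2)) := by
  have hδ : 0 < β / 4 := by positivity
  have hs : 0 ≤ s := by linarith [(m.cast_nonneg : (0 : ℝ) ≤ m)]
  have hμs : 1 ≤ μ * s := by
    rw [mul_comm, ← div_le_iff₀ hμ]
    linarith [(j.cast_nonneg : (0 : ℝ) ≤ j)]
  have hX0 : 0 ≤ X := (by positivity : 0 ≤ x * ε * γA).trans hX
  have hR := residualRate_pos (γA := γA) hC₁ hβ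
  set R := residualRate γA C₁ β
  have hA := (boundaryFactor_le hε hμ hC₁ hx hδ hjs).trans
    (c := (R * ε * s) ^ j * exp (β / 4 * x))
    (by
      gcongr
      rw [div_div_eq_mul_div, show (2 : ℝ) * 4 = 8 by norm_num]
      exact le_max_left _ _)
  have hB := (mul_mul_pow_succ_le_mul_exp hε hx hγA hδ hms hμs).trans
    (c := μ * (R * ε * s) ^ (m + 1) * exp (β / 4 * x))
    (by
      gcongr
      rw [div_div_eq_mul_div, mul_comm γA]
      exact le_max_right _ _)
  have hn : (ε * x * γA) ^ n ≤ X ^ n := pow_le_pow_left₀ (by positivity) (by linarith) n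
  have hexp : exp (β / 4 * x) * exp (β / 4 * x) * exp (-β * x) = exp (-β * x / 2) := by
    rw [← exp_add, ← exp_add]
    ring_nf
  rw [residual_summand_eq hμ.ne', pow_add]
  calc _ = (ε * x * γA) ^ n * ((ε * x * γA) ^ (m + 1) *
          ((ε / μ) ^ j * (μ + 1 / ((j : ℝ) + 1)) ^ j * (1 / (j ! : ℝ)) * (C₁ * j + x) ^ (2 * j))) *
          exp (-β * x) := by ring
    _ ≤ X ^ n * ((μ * (R * ε * s) ^ (m + 1) * exp (β / 4 * x)) *
          ((R * ε * s) ^ j * exp (β / 4 * x))) * exp (-β * x) := by gcongr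
    _ = X ^ n * (μ * (R * ε * s) ^ (j + m + 1) * exp (-β * x / 2)) := by
        rw [← hexp, add_assoc, add_comm j, pow_add]
        ring

lemma term18_le {γA X C₁ β ε μ x : ℝ} (hγA : 0 ≤ γA) (hC₁ : 0 ≤ C₁) (hβ : 0 < β)
    (hε : 0 ≤ ε) (hμ : 0 < μ) (hx : 0 ≤ x) (hX : x * ε * γA ≤ X) (M n : ℕ) :
    term18 γA C₁ β ε μ x M (M + 1 + n) ≤
      X ^ n * (μ * (2 * residualRate γA C₁ β * ε * (M + 1 + 1 / μ)) ^ (M + 1) *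
        exp (-β * x / 2)) := by
  set R := residualRate γA C₁ β
  set s : ℝ := M + 1 + 1 / μ
  have hX0 : 0 ≤ X := (by positivity : 0 ≤ x * ε * γA).trans hX
  have hR : 0 < R := residualRate_pos hC₁ hβ
  have hs0 : 0 < s := by positivity
  rw [term18, mul_sum]
  refine (sum_le_card_nsmul _ _
    (X ^ n * (μ * (R * ε * s) ^ (M + 1) * exp (-β * x / 2))) ?_).trans ?_
  · intro k hk
    rw [mem_Icc] at hk
    obtain ⟨j, m, hk, hM⟩ : ∃ j m : ℕ, k = m + 1 + n ∧ M = j + m :=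
      ⟨M + 1 + n - k, k - (n + 1), by omega, by omega⟩
    rw [show M + 1 + n - k = j by omega, show M + 1 + n = j + (m + 1 + n) by omega, hk,
      show M + 1 = j + m + 1 by omega]
    have hs : s = j + m + 1 + 1 / μ := by simp only [s, hM, Nat.cast_add]
    have hμ' : 0 ≤ 1 / μ := by positivity
    exact residual_summand_le hγA hC₁ hβ hε hμ hx hX n (by linarith)
      (by linarith [(j.cast_nonneg : (0 : ℝ) ≤ j)])
  · have hcard : ((M + 1 : ℕ) : ℝ) ≤ 2 ^ (M + 1) := by exact_mod_cast (Nat.lt_two_pow_self).le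
    rw [Nat.card_Icc, show M + 1 + n + 1 - (M + 1 + n - M) = M + 1 by omega, nsmul_eq_mul,
      show 2 * R * ε * s = 2 * (R * ε * s) by ring, mul_pow (2 : ℝ)]
    calc ((M + 1 : ℕ) : ℝ) * (X ^ n * (μ * (R * ε * s) ^ (M + 1) * exp (-β * x / 2)))
        ≤ 2 ^ (M + 1) * (X ^ n * (μ * (R * ε * s) ^ (M + 1) * exp (-β * x / 2))) := by
          gcongr
      _ = X ^ n * (μ * (2 ^ (M + 1) * (R * ε * s) ^ (M + 1)) * exp (-β * x / 2)) := by ring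

theorem stmt_18_general (γA X C₁ β : ℝ) (hγA : 0 < γA) (hX1 : X < 1)
    (hC₁ : 0 < C₁) (hβ : 0 < β) :
    ∃ C γ : ℝ, 0 < C ∧ 0 < γ ∧
      ∀ ε μ : ℝ, 0 < ε → ε ≤ μ → μ ≤ 1 →
      ∀ M : ℕ, ∀ xh : ℝ, 0 ≤ xh → xh * ε * γA ≤ X →
        (∑' n : ℕ, term18 γA C₁ β ε μ xh M (M + 1 + n)) ≤
          (C * μ / (1 - X)) * (γ * ε * ((M : ℝ) + 1 + 1 / μ)) ^ (M + 1) *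
            Real.exp (-β * xh / 2) := by
  refine ⟨1, 2 * residualRate γA C₁ β, one_pos,
    mul_pos two_pos (residualRate_pos hC₁.le hβ), ?_⟩
  intro ε μ hε hεμ _ M xh hxh hxX
  have hμ : 0 < μ := hε.trans_le hεμ
  have hX0 : 0 ≤ X := (by positivity : 0 ≤ xh * ε * γA).trans hxX
  set c := μ * (2 * residualRate γA C₁ β * ε * (M + 1 + 1 / μ)) ^ (M + 1) * exp (-β * xh / 2)
  have hbound := term18_le hγA.le hC₁.le hβ hε.le hμ hxh hxX M
  have hgeom : Summable (fun n : ℕ ↦ X ^ n * c) :=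
    (summable_geometric_of_lt_one hX0 hX1).mul_right c
  have hnonneg : ∀ n, 0 ≤ term18 γA C₁ β ε μ xh M (M + 1 + n) := fun n ↦ by
    unfold term18; positivity
  calc (∑' n : ℕ, term18 γA C₁ β ε μ xh M (M + 1 + n))
      ≤ ∑' n : ℕ, X ^ n * c := (hgeom.of_nonneg_of_le hnonneg hbound).tsum_le_tsum hbound hgeom
    _ = 1 * μ / (1 - X) * (2 * residualRate γA C₁ β * ε * (M + 1 + 1 / μ)) ^ (M + 1) *
          exp (-β * xh / 2) := by
        rw [tsum_mul_right, tsum_geometric_of_lt_one hX0 hX1]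
        ring

/-- Summation estimate for the residual of the truncated boundary-layer
expansion: for `0 ≤ x̂εγ_A ≤ X < 1` the double sum over `i ≥ M+1` and
`i-M ≤ k ≤ i` is bounded by `(Cμ/(1-X))(γε(M+1+1/μ))^{M+1}e^{-βx̂/2}`. -/
theorem stmt_18 (γA X C₁ β : ℝ) (hγA : 0 < γA) (hX0 : 0 < X) (hX1 : X < 1)
    (hC₁ : 0 < C₁) (hβ : 0 < β) :
    ∃ C γ : ℝ, 0 < C ∧ 0 < γ ∧
      ∀ ε μ : ℝ, 0 < ε → ε ≤ μ → μ ≤ 1 →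
      ∀ M : ℕ, ∀ xh : ℝ, 0 ≤ xh → xh * ε * γA ≤ X →
        (∑' n : ℕ, term18 γA C₁ β ε μ xh M (M + 1 + n)) ≤
          (C * μ / (1 - X)) * (γ * ε * ((M : ℝ) + 1 + 1 / μ)) ^ (M + 1) *
            Real.exp (-β * xh / 2) :=
  stmt_18_general γA X C₁ β hγA hX1 hC₁ hβ
end

section
/- Let μ ∈ (0,1], C > 0, K > 0, and let 0 < r < 1/(2eK). Suppose u is holomorphic on the open set D := {z ∈ ℂ : dist(z, [0,1]) < r} and satisfies |u^{(n)}(x)| ≤ C·K^n·max{n, μ^{-1}}^n for all x ∈ [0,1] and all n ∈ ℕ. Then there exists a constant Ĉ > 0, depending only on C, K, and r (and not on μ), such that |u(z)| ≤ Ĉ·e^{rK/μ} for all z ∈ D. -/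
/-! The Taylor series of `u` at a point `x ∈ [0,1]` with `|z - x| < r` converges at `z`.
Since `max(n, μ⁻¹)ⁿ ≤ nⁿ + μ⁻ⁿ` and `nⁿ/n! ≤ eⁿ`, its `n`-th term is at most
`C (rKe)ⁿ + C (rK/μ)ⁿ/n!`; the condition `2eKr < 1` makes the first part a geometric series
bounded by `2C`, while the second part sums to `C e^{rK/μ}`. -/

open Set Metric Nat Real

theorem Complex.norm_le_tsum_of_norm_iteratedDeriv_le {u : ℂ → ℂ} {c z : ℂ} {r : ℝ}
    (hu : DifferentiableOn ℂ u (ball c r)) (hz : z ∈ ball c r) {a : ℕ → ℝ} (ha : Summable a)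
    (hterm : ∀ n, ‖z - c‖ ^ n / n ! * ‖iteratedDeriv n u c‖ ≤ a n) :
    ‖u z‖ ≤ ∑' n, a n := by
  rw [← (Complex.hasSum_taylorSeries_on_ball hu hz).tsum_eq]
  refine tsum_of_norm_bounded ha.hasSum fun n => le_of_eq_of_le ?_ (hterm n)
  simp [div_eq_inv_mul, mul_assoc]

theorem Real.hasSum_pow_div_factorial (x : ℝ) : HasSum (fun n => x ^ n / n !) (exp x) :=
  exp_eq_exp_ℝ ▸ NormedSpace.expSeries_div_hasSum_exp x

theorem max_pow_le_pow_add_pow {R : Type*} [Semiring R] [LinearOrder R] [IsOrderedRing R]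
    {a b : R} (ha : 0 ≤ a) (hb : 0 ≤ b) (n : ℕ) : max a b ^ n ≤ a ^ n + b ^ n := by
  rcases le_total a b with h | h
  · rw [max_eq_right h]; exact le_add_of_nonneg_left (pow_nonneg ha n)
  · rw [max_eq_left h]; exact le_add_of_nonneg_right (pow_nonneg hb n)

theorem pow_mul_max_pow_div_factorial_le {t m : ℝ} (ht : 0 ≤ t) (hm : 0 ≤ m) (n : ℕ) :
    t ^ n * max (n : ℝ) m ^ n / n ! ≤ (t * exp 1) ^ n + (t * m) ^ n / n ! := by
  have hfac : (n : ℝ) ^ n / n ! ≤ exp 1 ^ n := by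
    rw [← exp_nat_mul, mul_one]; exact pow_div_factorial_le_exp _ n.cast_nonneg n
  calc t ^ n * max (n : ℝ) m ^ n / n ! ≤ t ^ n * ((n : ℝ) ^ n + m ^ n) / n ! := by
        gcongr; exact max_pow_le_pow_add_pow n.cast_nonneg hm n
    _ = t ^ n * ((n : ℝ) ^ n / n !) + (t * m) ^ n / n ! := by ring
    _ ≤ t ^ n * exp 1 ^ n + (t * m) ^ n / n ! := by gcongr
    _ = (t * exp 1) ^ n + (t * m) ^ n / n ! := by ring

theorem exists_mem_Icc_dist_lt_of_infDist_lt {z : ℂ} {r : ℝ}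
    (hz : infDist z ((fun t : ℝ => (t : ℂ)) '' Icc 0 1) < r) :
    ∃ x ∈ Icc (0 : ℝ) 1, dist z x < r := by
  obtain ⟨_, ⟨x, hx, rfl⟩, hzx⟩ :=
    (infDist_lt_iff ((nonempty_Icc.mpr zero_le_one).image _)).mp hz
  exact ⟨x, hx, hzx⟩

/-- μ-explicit derivative bounds of a holomorphic function on the segment
`[0,1] ⊂ ℂ` yield the pointwise bound `|u(z)| ≤ Ĉ e^{rK/μ}` on the complex
`r`-neighborhood of the segment, with `Ĉ` depending only on `C`, `K`, `r`
(not on `μ`). -/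
theorem stmt_19 (C K r : ℝ) (hC : 0 < C) (hK : 0 < K)
    (hr : 0 < r) (hr' : r < 1 / (2 * Real.exp 1 * K)) :
    ∃ Chat : ℝ, 0 < Chat ∧
      ∀ μ : ℝ, 0 < μ → μ ≤ 1 →
      ∀ u : ℂ → ℂ,
        DifferentiableOn ℂ u
          {z : ℂ | Metric.infDist z ((fun t : ℝ => (t : ℂ)) '' Icc 0 1) < r} →
        (∀ n : ℕ, ∀ x ∈ Icc (0:ℝ) 1,
          ‖iteratedDeriv n u (x : ℂ)‖ ≤
            C * K ^ n * (max (n : ℝ) μ⁻¹) ^ n) →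
        ∀ z ∈ {z : ℂ | Metric.infDist z ((fun t : ℝ => (t : ℂ)) '' Icc 0 1) < r},
          ‖u z‖ ≤ Chat * Real.exp (r * K / μ) := by
  have hrKe : r * K * exp 1 ≤ 1 / 2 := by
    rw [lt_div_iff₀ (by positivity)] at hr'; nlinarith
  refine ⟨3 * C, by positivity, fun μ hμ _ u hu hderiv z hz => ?_⟩
  obtain ⟨x, hx, hzx⟩ := exists_mem_Icc_dist_lt_of_infDist_lt hz
  have hball : DifferentiableOn ℂ u (ball (x : ℂ) r) :=
    hu.mono fun w hw => (infDist_le_dist_of_mem (mem_image_of_mem _ hx)).trans_lt hw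
  have hmajorant : HasSum (fun n : ℕ => C * ((1 / 2) ^ n + (r * K / μ) ^ n / n !))
      (C * (2 + exp (r * K / μ))) := by
    refine HasSum.mul_left C ?_
    convert hasSum_geometric_two.add (hasSum_pow_div_factorial (r * K / μ)) using 1
  have hterm (n : ℕ) : ‖z - x‖ ^ n / n ! * ‖iteratedDeriv n u x‖
      ≤ C * ((1 / 2) ^ n + (r * K / μ) ^ n / n !) :=
    calc ‖z - x‖ ^ n / n ! * ‖iteratedDeriv n u x‖
        ≤ r ^ n / n ! * (C * K ^ n * max (n : ℝ) μ⁻¹ ^ n) := by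
          gcongr
          · exact (dist_eq_norm z x ▸ hzx).le
          · exact hderiv n x hx
      _ = C * ((r * K) ^ n * max (n : ℝ) μ⁻¹ ^ n / n !) := by ring
      _ ≤ C * ((r * K * exp 1) ^ n + (r * K * μ⁻¹) ^ n / n !) := by
          gcongr; exact pow_mul_max_pow_div_factorial_le (by positivity) (by positivity) n
      _ ≤ C * ((1 / 2) ^ n + (r * K / μ) ^ n / n !) := by
          rw [← div_eq_mul_inv]; gcongr
  calc ‖u z‖ ≤ C * (2 + exp (r * K / μ)) := by
        rw [← hmajorant.tsum_eq]
        exact Complex.norm_le_tsum_of_norm_iteratedDeriv_le hball hzx hmajorant.summable hterm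
    _ ≤ 3 * C * exp (r * K / μ) := by
        have : 1 ≤ exp (r * K / μ) := one_le_exp (by positivity)
        nlinarith
end
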